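/- arXiv:0708.3869 — 4 statements merged into one kernel-verified Lean document; each statement's English description precedes it below -/
import Mathlib

section
/- If S, C is a T-periodic solution of the enzyme system with 0 < C(t) < K for all t, then the mean input satisfies (1/T)∫₀ᵀ I(t) dt < k2·K. (Necessary condition for existence of a periodic solution.) -/
/-! Adding the two equations, the exchange terms cancel and `(S + C)' = I - k₂ C`. Integrating over
a period, the left side vanishes by periodicity, so `∫₀ᵀ I = k₂ ∫₀ᵀ C`, and `C < K` bounds the right
side strictly by `k₂ K T`. -/

open intervalIntegral

theorem Function.Periodic.integral_deriv_eq_zero {f f' : ℝ → ℝ} {T : ℝ}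
    (hper : Function.Periodic f T) (hf : ∀ t, HasDerivAt f (f' t) t)
    (hf' : IntervalIntegrable f' MeasureTheory.volume 0 T) : ∫ t in (0:ℝ)..T, f' t = 0 := by
  rw [integral_eq_sub_of_hasDerivAt (fun t _ => hf t) hf', hper.eq, sub_self]

theorem integral_lt_mul_of_forall_lt {f : ℝ → ℝ} {T K : ℝ} (hT : 0 < T) (hf : Continuous f)
    (hfK : ∀ t, f t < K) : ∫ t in (0:ℝ)..T, f t < T * K := by
  have h := integral_lt_integral_of_continuousOn_of_le_of_exists_lt hT hf.continuousOn
    continuousOn_const (fun t _ => (hfK t).le) ⟨0, ⟨le_rfl, hT.le⟩, hfK 0⟩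
  simpa only [integral_const, smul_eq_mul, sub_zero] using h

section EnzymeSystem

variable {k1 km1 k2 K : ℝ} {I S C : ℝ → ℝ}

theorem hasDerivAt_substrate_add_complex (hS : Differentiable ℝ S) (hC : Differentiable ℝ C)
    (hS' : ∀ t, deriv S t = I t - k1 * (K - C t) * S t + km1 * C t)
    (hC' : ∀ t, deriv C t = k1 * (K - C t) * S t - (km1 + k2) * C t) (t : ℝ) :
    HasDerivAt (S + C) (I t - k2 * C t) t := by
  have h := (hS t).hasDerivAt.add (hC t).hasDerivAt
  rw [hS' t, hC' t] at h
  exact h.congr_deriv (by ring)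

theorem integral_input_eq_mul_integral_complex {T : ℝ} (hI : Continuous I)
    (hS : Differentiable ℝ S) (hC : Differentiable ℝ C)
    (hSper : Function.Periodic S T) (hCper : Function.Periodic C T)
    (hS' : ∀ t, deriv S t = I t - k1 * (K - C t) * S t + km1 * C t)
    (hC' : ∀ t, deriv C t = k1 * (K - C t) * S t - (km1 + k2) * C t) :
    ∫ t in (0:ℝ)..T, I t = k2 * ∫ t in (0:ℝ)..T, C t := by
  have hIint : IntervalIntegrable I MeasureTheory.volume 0 T := hI.intervalIntegrable 0 T
  have hCint : IntervalIntegrable (fun t => k2 * C t) MeasureTheory.volume 0 T :=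
    (continuous_const.mul hC.continuous).intervalIntegrable 0 T
  have hbalance : ∫ t in (0:ℝ)..T, (I t - k2 * C t) = 0 :=
    (hSper.add hCper).integral_deriv_eq_zero
      (hasDerivAt_substrate_add_complex hS hC hS' hC') (hIint.sub hCint)
  rwa [integral_sub hIint hCint, sub_eq_zero, integral_const_mul] at hbalance

end EnzymeSystem

theorem necessary_condition_general
    (T k1 km1 k2 K : ℝ) (hT : 0 < T)
    (hk2 : 0 < k2)
    (I S C : ℝ → ℝ) (hI : Continuous I)
    (hS : Differentiable ℝ S) (hC : Differentiable ℝ C)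
    (hSper : ∀ t, S (t + T) = S t) (hCper : ∀ t, C (t + T) = C t)
    (hS' : ∀ t, deriv S t = I t - k1 * (K - C t) * S t + km1 * C t)
    (hC' : ∀ t, deriv C t = k1 * (K - C t) * S t - (km1 + k2) * C t)
    (hCbd : ∀ t, 0 < C t ∧ C t < K) :
    (1 / T) * ∫ t in (0:ℝ)..T, I t < k2 * K := by
  have hCint : ∫ t in (0:ℝ)..T, C t < T * K :=
    integral_lt_mul_of_forall_lt hT hC.continuous fun t => (hCbd t).2
  rw [integral_input_eq_mul_integral_complex hI hS hC hSper hCper hS' hC', one_div_mul_eq_div,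
    div_lt_iff₀ hT]
  calc k2 * ∫ t in (0:ℝ)..T, C t < k2 * (T * K) := mul_lt_mul_of_pos_left hCint hk2
    _ = k2 * K * T := by ring

theorem necessary_condition
    (T k1 km1 k2 K : ℝ) (hT : 0 < T) (hk1 : 0 ≤ k1) (hkm1 : 0 ≤ km1)
    (hk2 : 0 < k2) (hK : 0 < K)
    (I S C : ℝ → ℝ) (hI : Continuous I) (hIper : ∀ t, I (t + T) = I t)
    (hS : Differentiable ℝ S) (hC : Differentiable ℝ C)
    (hSper : ∀ t, S (t + T) = S t) (hCper : ∀ t, C (t + T) = C t)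
    (hS' : ∀ t, deriv S t = I t - k1 * (K - C t) * S t + km1 * C t)
    (hC' : ∀ t, deriv C t = k1 * (K - C t) * S t - (km1 + k2) * C t)
    (hCbd : ∀ t, 0 < C t ∧ C t < K) :
    (1 / T) * ∫ t in (0:ℝ)..T, I t < k2 * K :=
  necessary_condition_general T k1 km1 k2 K hT hk2 I S C hI hS hC hSper hCper hS' hC' hCbd
end

section
/- For constant input I(t) = Ī ≥ 0, a stationary solution (S̄, C̄) with S̄ > 0 and 0 < C̄ < K of the system 0 = Ī - k1(K-C̄)S̄ + k₋₁C̄, 0 = k1(K-C̄)S̄ - (k₋₁+k2)C̄ exists if and only if 0 < Ī < k2·K, and in that case it is unique. -/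
/-!
Adding the two stationarity equations gives `Ī = k₂ C̄`, which pins down `C̄ = Ī / k₂`; the second
equation then forces `S̄ = (k₋₁ + k₂) C̄ / (k₁ (K - C̄))`. So a stationary solution is unique, and it
exists exactly when `0 < Ī / k₂ < K`, in which case the formula for `S̄` is positive.
-/

def IsSteadyState (k1 k2 km1 K I S C : ℝ) : Prop :=
  S > 0 ∧ 0 < C ∧ C < K ∧ I - k1 * (K - C) * S + km1 * C = 0 ∧
    k1 * (K - C) * S - (km1 + k2) * C = 0

section

variable {k1 k2 km1 K I S C : ℝ}

theorem IsSteadyState.input_eq (h : IsSteadyState k1 k2 km1 K I S C) : I = k2 * C := by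
  obtain ⟨-, -, -, h₁, h₂⟩ := h
  linarith

theorem IsSteadyState.eq_div (hk1 : 0 < k1) (hk2 : 0 < k2) (h : IsSteadyState k1 k2 km1 K I S C) :
    C = I / k2 ∧ S = (km1 + k2) * C / (k1 * (K - C)) := by
  have hI := h.input_eq
  obtain ⟨-, -, hCK, -, h₂⟩ := h
  constructor
  · rw [eq_div_iff hk2.ne', hI, mul_comm]
  · rw [eq_div_iff (mul_pos hk1 (sub_pos.2 hCK)).ne']
    linarith

theorem isSteadyState_iff (hk1 : 0 < k1) (hk2 : 0 < k2) (hkm1 : 0 ≤ km1) :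
    IsSteadyState k1 k2 km1 K I S C ↔
      0 < C ∧ C < K ∧ C = I / k2 ∧ S = (km1 + k2) * C / (k1 * (K - C)) := by
  constructor
  · intro h
    exact ⟨h.2.1, h.2.2.1, h.eq_div hk1 hk2⟩
  · rintro ⟨hC, hCK, rfl, rfl⟩
    have hKC : 0 < K - I / k2 := sub_pos.2 hCK
    have hS : k1 * (K - I / k2) * ((km1 + k2) * (I / k2) / (k1 * (K - I / k2)))
        = (km1 + k2) * (I / k2) := mul_div_cancel₀ _ (by positivity)
    refine ⟨by positivity, hC, hCK, ?_, by rw [hS]; ring⟩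
    rw [hS]
    field_simp
    ring

theorem exists_isSteadyState_iff (hk1 : 0 < k1) (hk2 : 0 < k2) (hkm1 : 0 ≤ km1) :
    (∃ S C, IsSteadyState k1 k2 km1 K I S C) ↔ 0 < I ∧ I < k2 * K := by
  simp_rw [isSteadyState_iff hk1 hk2 hkm1]
  constructor
  · rintro ⟨S, C, hC, hCK, rfl, -⟩
    exact ⟨(div_pos_iff_of_pos_right hk2).1 hC, (div_lt_iff₀' hk2).1 hCK⟩
  · rintro ⟨hI, hIK⟩
    exact ⟨_, I / k2, div_pos hI hk2, (div_lt_iff₀' hk2).2 hIK, rfl, rfl⟩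

theorem IsSteadyState.unique {S' C' : ℝ} (hk1 : 0 < k1) (hk2 : 0 < k2)
    (h : IsSteadyState k1 k2 km1 K I S C) (h' : IsSteadyState k1 k2 km1 K I S' C') :
    S = S' ∧ C = C' := by
  obtain ⟨rfl, rfl⟩ := h.eq_div hk1 hk2
  obtain ⟨rfl, rfl⟩ := h'.eq_div hk1 hk2
  exact ⟨rfl, rfl⟩

end

theorem stationary_exists_iff_general
    (k1 k2 km1 K Ibar : ℝ) (hk1 : 0 < k1) (hk2 : 0 < k2) (hkm1 : 0 ≤ km1) :
    ((∃ Sbar Cbar : ℝ, Sbar > 0 ∧ 0 < Cbar ∧ Cbar < K ∧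
        Ibar - k1 * (K - Cbar) * Sbar + km1 * Cbar = 0 ∧
        k1 * (K - Cbar) * Sbar - (km1 + k2) * Cbar = 0) ↔
      (0 < Ibar ∧ Ibar < k2 * K)) ∧
    (∀ S1 C1 S2 C2 : ℝ,
      (S1 > 0 ∧ 0 < C1 ∧ C1 < K ∧
        Ibar - k1 * (K - C1) * S1 + km1 * C1 = 0 ∧
        k1 * (K - C1) * S1 - (km1 + k2) * C1 = 0) →
      (S2 > 0 ∧ 0 < C2 ∧ C2 < K ∧
        Ibar - k1 * (K - C2) * S2 + km1 * C2 = 0 ∧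
        k1 * (K - C2) * S2 - (km1 + k2) * C2 = 0) →
      S1 = S2 ∧ C1 = C2) :=
  ⟨exists_isSteadyState_iff hk1 hk2 hkm1,
    fun _ _ _ _ h h' => IsSteadyState.unique hk1 hk2 h h'⟩

theorem stationary_exists_iff
    (k1 k2 km1 K Ibar : ℝ) (hk1 : 0 < k1) (hk2 : 0 < k2) (hkm1 : 0 ≤ km1)
    (hK : 0 < K) (hI : 0 ≤ Ibar) :
    ((∃ Sbar Cbar : ℝ, Sbar > 0 ∧ 0 < Cbar ∧ Cbar < K ∧
        Ibar - k1 * (K - Cbar) * Sbar + km1 * Cbar = 0 ∧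
        k1 * (K - Cbar) * Sbar - (km1 + k2) * Cbar = 0) ↔
      (0 < Ibar ∧ Ibar < k2 * K)) ∧
    (∀ S1 C1 S2 C2 : ℝ,
      (S1 > 0 ∧ 0 < C1 ∧ C1 < K ∧
        Ibar - k1 * (K - C1) * S1 + km1 * C1 = 0 ∧
        k1 * (K - C1) * S1 - (km1 + k2) * C1 = 0) →
      (S2 > 0 ∧ 0 < C2 ∧ C2 < K ∧
        Ibar - k1 * (K - C2) * S2 + km1 * C2 = 0 ∧
        k1 * (K - C2) * S2 - (km1 + k2) * C2 = 0) →
      S1 = S2 ∧ C1 = C2) :=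
  stationary_exists_iff_general k1 k2 km1 K Ibar hk1 hk2 hkm1
end

section
/- Given a continuous T-periodic function C with ∫₀ᵀ C(t)dt = T·C̄ where C̄ < K, and continuous T-periodic I ≥ 0, k₋₁ ≥ 0, C(t) ≥ 0 for all t, and either Ī > 0 or k₋₁·C̄ > 0, the unique T-periodic solution S of S'(t) + k1(K - C(t))S(t) = I(t) + k₋₁C(t) satisfies S(t) > 0 for all t ∈ ℝ. -/
/-!
Let `A` be a primitive of `a = k1 (K - C)` and `f = I + k₋₁ C ≥ 0`. The integrating factor gives
`(exp A * S)' = exp A * f`. Over one period `A` grows by `δ = ∫₀ᵀ a = k1 T (K - C̄) > 0` while `S`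
returns to its value, so `(exp δ - 1) exp (A t) S t = ∫ₜ^{t+T} exp A * f`, which is positive since
`exp A > 0` and `f` has positive mean `Ī + k₋₁ C̄`.
-/

open Function Real MeasureTheory Filter intervalIntegral

theorem intervalIntegral.integral_mul_pos_of_integral_pos {w f : ℝ → ℝ} {a b : ℝ}
    (hw : ∀ x, 0 < w x) (hf : 0 ≤ f) (hf_int : IntervalIntegrable f volume a b)
    (hwf_int : IntervalIntegrable (fun x => w x * f x) volume a b)
    (h : 0 < ∫ x in a..b, f x) : 0 < ∫ x in a..b, w x * f x := by
  have hsupp : support (fun x => w x * f x) = support f := by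
    ext x; simp [(hw x).ne']
  rw [integral_pos_iff_support_of_nonneg_ae (Eventually.of_forall hf) hf_int] at h
  rwa [integral_pos_iff_support_of_nonneg_ae
    (Eventually.of_forall fun x => mul_nonneg (hw x).le (hf x)) hwf_int, hsupp]

theorem hasDerivAt_exp_mul_of_linear_ode {A a S f : ℝ → ℝ} {S' t : ℝ}
    (hA : HasDerivAt A (a t) t) (hS : HasDerivAt S S' t) (hode : S' + a t * S t = f t) :
    HasDerivAt (fun t => exp (A t) * S t) (exp (A t) * f t) t :=
  (hA.exp.mul hS).congr_deriv (by rw [← hode]; ring)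

theorem periodic_linear_ode_solution_pos {a f S : ℝ → ℝ} {T : ℝ}
    (ha : Continuous a) (haper : Periodic a T) (ha_int : 0 < ∫ t in 0..T, a t)
    (hf : Continuous f) (hfper : Periodic f T) (hf_nn : 0 ≤ f) (hf_int : 0 < ∫ t in 0..T, f t)
    (hS : Differentiable ℝ S) (hSper : Periodic S T)
    (hode : ∀ t, deriv S t + a t * S t = f t) (t : ℝ) : 0 < S t := by
  set A : ℝ → ℝ := fun t => ∫ s in 0..t, a s
  set δ := ∫ t in 0..T, a t
  have hA : ∀ t, HasDerivAt A (a t) t := fun t =>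
    integral_hasDerivAt_right (ha.intervalIntegrable _ _) (ha.stronglyMeasurableAtFilter _ _)
      ha.continuousAt
  have hA_cont : Continuous A := continuous_iff_continuousAt.2 fun t => (hA t).continuousAt
  have hAper : A (t + T) = A t + δ := by
    simpa using haper.intervalIntegral_add_eq_add 0 t ha.intervalIntegrable
  have hweight_int : IntervalIntegrable (fun s => exp (A s) * f s) volume t (t + T) :=
    (hA_cont.rexp.mul hf).intervalIntegrable _ _
  have hgrowth : (exp δ - 1) * (exp (A t) * S t) = ∫ s in t..t + T, exp (A s) * f s := by
    rw [integral_eq_sub_of_hasDerivAt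
      (fun s _ => hasDerivAt_exp_mul_of_linear_ode (hA s) (hS s).hasDerivAt (hode s))
      hweight_int, hAper, hSper t, exp_add]
    ring
  have hfT : 0 < ∫ s in t..t + T, f s := by
    rwa [hfper.intervalIntegral_add_eq t 0, zero_add]
  have hpos : 0 < (exp δ - 1) * (exp (A t) * S t) := hgrowth ▸
    integral_mul_pos_of_integral_pos (fun s => exp_pos (A s)) hf_nn
      (hf.intervalIntegrable _ _) hweight_int hfT
  have hδ : 0 < exp δ - 1 := by simpa using ha_int
  exact (pos_iff_pos_of_mul_pos ((pos_iff_pos_of_mul_pos hpos).1 hδ)).1 (exp_pos _)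

theorem periodic_solution_positive_general
    (T k1 km1 K Cbar : ℝ) (hT : 0 < T) (hk1 : 0 < k1) (hkm1 : 0 ≤ km1)
    (hCbarK : Cbar < K)
    (I C : ℝ → ℝ) (hI : Continuous I) (hIper : ∀ t, I (t + T) = I t)
    (hInn : ∀ t, 0 ≤ I t)
    (hC : Continuous C) (hCper : ∀ t, C (t + T) = C t)
    (hCnn : ∀ t, 0 ≤ C t)
    (hCint : ∫ t in (0:ℝ)..T, C t = T * Cbar)
    (hpos : (1 / T) * (∫ t in (0:ℝ)..T, I t) + km1 * Cbar > 0)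
    (S : ℝ → ℝ) (hS : Differentiable ℝ S) (hSper : ∀ t, S (t + T) = S t)
    (hS' : ∀ t, deriv S t + k1 * (K - C t) * S t = I t + km1 * C t) :
    ∀ t, 0 < S t := by
  have hC_int := hC.intervalIntegrable (μ := volume) 0 T
  have hdecay : ∫ t in 0..T, k1 * (K - C t) = k1 * (T * (K - Cbar)) := by
    rw [intervalIntegral.integral_const_mul, integral_sub intervalIntegrable_const hC_int,
      intervalIntegral.integral_const, hCint, smul_eq_mul, sub_zero]
    ring
  have hsource : ∫ t in 0..T, (I t + km1 * C t) =
      T * ((1 / T) * (∫ t in 0..T, I t) + km1 * Cbar) := by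
    rw [integral_add (hI.intervalIntegrable _ _) (hC_int.const_mul km1),
      intervalIntegral.integral_const_mul, hCint]
    field_simp
  have hδ : 0 < ∫ t in 0..T, k1 * (K - C t) := by
    rw [hdecay]
    have := sub_pos.2 hCbarK
    positivity
  exact periodic_linear_ode_solution_pos (f := fun t => I t + km1 * C t)
    (by fun_prop) (fun t => by simp only [hCper]) hδ
    (by fun_prop) (fun t => by simp only [hIper, hCper])
    (fun t => add_nonneg (hInn t) (mul_nonneg hkm1 (hCnn t))) (by rw [hsource]; positivity)
    hS hSper hS'

theorem periodic_solution_positive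
    (T k1 km1 K Cbar : ℝ) (hT : 0 < T) (hk1 : 0 < k1) (hkm1 : 0 ≤ km1)
    (hK : 0 < K) (hCbar0 : 0 < Cbar) (hCbarK : Cbar < K)
    (I C : ℝ → ℝ) (hI : Continuous I) (hIper : ∀ t, I (t + T) = I t)
    (hInn : ∀ t, 0 ≤ I t)
    (hC : Continuous C) (hCper : ∀ t, C (t + T) = C t)
    (hCnn : ∀ t, 0 ≤ C t)
    (hCint : ∫ t in (0:ℝ)..T, C t = T * Cbar)
    (hpos : (1 / T) * (∫ t in (0:ℝ)..T, I t) + km1 * Cbar > 0)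
    (S : ℝ → ℝ) (hS : Differentiable ℝ S) (hSper : ∀ t, S (t + T) = S t)
    (hS' : ∀ t, deriv S t + k1 * (K - C t) * S t = I t + km1 * C t) :
    ∀ t, 0 < S t :=
  periodic_solution_positive_general T k1 km1 K Cbar hT hk1 hkm1 hCbarK I C hI hIper hInn hC hCper
    hCnn hCint hpos S hS hSper hS'
end

section
/- Let S, C be differentiable T-periodic functions satisfying C'(t) = k1(K - C(t))S(t) - (k₋₁+k2)C(t) with S(t) > 0 and 0 ≤ C(t) ≤ K for all t, where k1 > 0, k2 > 0, k₋₁ ≥ 0, K > 0. Then 0 < C(t) < K for all t ∈ ℝ. (A strict maximum-principle type bound.) -/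
/-! Where `C` touches `0` (resp. `K`) it attains a global minimum (resp. maximum), so `C'`
vanishes there, whereas the equation forces `C' = k1 K S > 0` (resp. `C' = -(k₋₁ + k2) K < 0`). -/

theorem strict_bounds_C_general
    (k1 km1 k2 K : ℝ) (hk1 : 0 < k1) (hkm1 : 0 ≤ km1)
    (hk2 : 0 < k2) (hK : 0 < K)
    (S C : ℝ → ℝ)
    (hC' : ∀ t, deriv C t = k1 * (K - C t) * S t - (km1 + k2) * C t)
    (hSpos : ∀ t, 0 < S t) (hCbd : ∀ t, 0 ≤ C t ∧ C t ≤ K) :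
    ∀ t, 0 < C t ∧ C t < K := by
  intro t
  obtain ⟨hC0, hCK⟩ := hCbd t
  refine ⟨hC0.lt_of_ne fun hzero => ?_, hCK.lt_of_ne fun hfull => ?_⟩
  · have hmin : IsLocalMin C t := .of_forall fun x => hzero ▸ (hCbd x).1
    have hslope : k1 * K * S t = 0 := by
      simpa [← hzero, hmin.deriv_eq_zero] using (hC' t).symm
    exact (mul_pos (mul_pos hk1 hK) (hSpos t)).ne' hslope
  · have hmax : IsLocalMax C t := .of_forall fun x => hfull ▸ (hCbd x).2
    have hslope : (km1 + k2) * K = 0 := by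
      simpa [hfull, hmax.deriv_eq_zero] using (hC' t).symm
    exact (mul_pos (add_pos_of_nonneg_of_pos hkm1 hk2) hK).ne' hslope

theorem strict_bounds_C
    (T k1 km1 k2 K : ℝ) (hT : 0 < T) (hk1 : 0 < k1) (hkm1 : 0 ≤ km1)
    (hk2 : 0 < k2) (hK : 0 < K)
    (S C : ℝ → ℝ) (hS : Differentiable ℝ S) (hC : Differentiable ℝ C)
    (hSper : ∀ t, S (t + T) = S t) (hCper : ∀ t, C (t + T) = C t)
    (hC' : ∀ t, deriv C t = k1 * (K - C t) * S t - (km1 + k2) * C t)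
    (hSpos : ∀ t, 0 < S t) (hCbd : ∀ t, 0 ≤ C t ∧ C t ≤ K) :
    ∀ t, 0 < C t ∧ C t < K :=
  strict_bounds_C_general k1 km1 k2 K hk1 hkm1 hk2 hK S C hC' hSpos hCbd
end
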